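/- arXiv:2007.13500 — 4 statements merged into one kernel-verified Lean document; each statement's English description precedes it below -/
import Mathlib

section
/- If A ≼⁻ B (every finite positive atomic type over A with at least two edges realized in B is realized in A), η : A → 2 respects the 2-graph B, and c ∈ B \ A, then η extends to a function η' : A ∪ {c} → 2 respecting B. -/
open Set

variable {Ω : Type*}

/-- `η` respects the 2-graph given by `R` on the set `D`: no edge with label `e`
inside `D` has both endpoints colored `e`. -/
def RespectsOn (R : Fin 2 → Ω → Ω → Prop) (D : Set Ω) (η : Ω → Fin 2) : Prop :=
  ∀ e : Fin 2, ∀ a ∈ D, ∀ b ∈ D, R e a b → ¬(η a = e ∧ η b = e)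

/-- `z` realizes the finite positive atomic type with domain `t` and labels `s`. -/
def Realizes (R : Fin 2 → Ω → Ω → Prop) (t : Finset Ω) (s : Ω → Fin 2) (z : Ω) : Prop :=
  ∀ x ∈ t, R (s x) x z

/-- `D ≼⁻ B`: every finite positive atomic type over `D` with at least two edges
which is realized (somewhere) is realized by an element of `D`. -/
def PrecMinus (R : Fin 2 → Ω → Ω → Prop) (D : Set Ω) : Prop :=
  ∀ (t : Finset Ω) (s : Ω → Fin 2), 2 ≤ t.card → ↑t ⊆ D →
    (∃ z, Realizes R t s z) → ∃ z ∈ D, Realizes R t s z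

/-- If color `e` is safe for `c`, we can extend by `Function.update`. -/
lemma extend_of_safe
    (R : Fin 2 → Ω → Ω → Prop)
    (hirr : ∀ e, Irreflexive (R e)) (hsym : ∀ e, Symmetric (R e))
    (A : Set Ω) (η : Ω → Fin 2) (hη : RespectsOn R A η)
    (c : Ω) (hc : c ∉ A) (e : Fin 2)
    (hsafe : ∀ a ∈ A, R e a c → η a ≠ e) :
    ∃ η' : Ω → Fin 2, (∀ x ∈ A, η' x = η x) ∧ RespectsOn R (insert c A) η' := by
  classical
  refine ⟨Function.update η c e, ?_, ?_⟩
  · intro x hx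
    have hxc : x ≠ c := fun h => hc (h ▸ hx)
    exact Function.update_of_ne hxc _ _
  · intro e' a ha b hb hR hcontra
    obtain ⟨hae, hbe⟩ := hcontra
    by_cases hac : a = c <;> by_cases hbc : b = c
    · subst hac; subst hbc; exact hirr _ _ hR
    · subst hac
      rw [Function.update_self] at hae
      have hbA : b ∈ A := (Set.mem_insert_iff.mp hb).resolve_left hbc
      rw [Function.update_of_ne hbc] at hbe
      subst hae
      exact hsafe b hbA (hsym _ hR) hbe
    · subst hbc
      rw [Function.update_self] at hbe
      have haA : a ∈ A := (Set.mem_insert_iff.mp ha).resolve_left hac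
      rw [Function.update_of_ne hac] at hae
      subst hbe
      exact hsafe a haA hR hae
    · have haA : a ∈ A := (Set.mem_insert_iff.mp ha).resolve_left hac
      have hbA : b ∈ A := (Set.mem_insert_iff.mp hb).resolve_left hbc
      rw [Function.update_of_ne hac] at hae
      rw [Function.update_of_ne hbc] at hbe
      exact hη e' a haA b hbA hR ⟨hae, hbe⟩

/-- If `A ≼⁻ B`, `η : A → 2` respects the 2-graph, and `c ∉ A`, then `η` extends to a
coloring of `A ∪ {c}` respecting the 2-graph. -/
theorem extend_respecting_coloring_one_point
    (R : Fin 2 → Ω → Ω → Prop)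
    (hirr : ∀ e, Irreflexive (R e)) (hsym : ∀ e, Symmetric (R e))
    (hdisj : ∀ a b, ¬(R 0 a b ∧ R 1 a b))
    (A : Set Ω) (hA : PrecMinus R A)
    (η : Ω → Fin 2) (hη : RespectsOn R A η)
    (c : Ω) (hc : c ∉ A) :
    ∃ η' : Ω → Fin 2, (∀ x ∈ A, η' x = η x) ∧ RespectsOn R (insert c A) η' := by
  classical
  by_cases h0 : ∀ a ∈ A, R 0 a c → η a ≠ 0
  · exact extend_of_safe R hirr hsym A η hη c hc 0 h0
  by_cases h1 : ∀ a ∈ A, R 1 a c → η a ≠ 1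
  · exact extend_of_safe R hirr hsym A η hη c hc 1 h1
  exfalso
  push_neg at h0 h1
  obtain ⟨a₀, ha₀A, ha₀R, ha₀η⟩ := h0
  obtain ⟨a₁, ha₁A, ha₁R, ha₁η⟩ := h1
  have hne : a₀ ≠ a₁ := by
    intro h; rw [h, ha₁η] at ha₀η; exact absurd ha₀η (by decide)
  set s : Ω → Fin 2 := fun x => if x = a₀ then 0 else 1 with hs
  have hcard : 2 ≤ ({a₀, a₁} : Finset Ω).card := by
    rw [Finset.card_pair hne]
  have hsub : ↑({a₀, a₁} : Finset Ω) ⊆ A := by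
    intro x hx
    simp only [Finset.coe_insert, Finset.coe_singleton, Set.mem_insert_iff,
      Set.mem_singleton_iff] at hx
    rcases hx with rfl | rfl <;> assumption
  have hreal : ∃ z, Realizes R {a₀, a₁} s z := by
    refine ⟨c, ?_⟩
    intro x hx
    rcases Finset.mem_insert.mp hx with rfl | hx
    · simpa [hs] using ha₀R
    · rw [Finset.mem_singleton] at hx; subst hx
      simpa [hs, hne.symm] using ha₁R
  obtain ⟨z, hzA, hz⟩ := hA {a₀, a₁} s hcard hsub hreal
  have h0z : R 0 a₀ z := by
    simpa [hs] using hz a₀ (by simp)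
  have h1z : R 1 a₁ z := by
    simpa [hs, hne.symm] using hz a₁ (by simp)
  have hz0 : η z ≠ 0 := fun h => hη 0 a₀ ha₀A z hzA h0z ⟨ha₀η, h⟩
  have hz1 : η z ≠ 1 := fun h => hη 1 a₁ ha₁A z hzA h1z ⟨ha₁η, h⟩
  have : ∀ x : Fin 2, x = 0 ∨ x = 1 := by decide
  rcases this (η z) with h | h
  · exact hz0 h
  · exact hz1 h
end

section
/- If A ≼⁻ B and all elements of B \ A have edges only to elements of A (i.e., (B \ A)² ∩ (R₀ ∪ R₁) = ∅), then any η : A → 2 respecting B extends to some η'' : B → 2 respecting B. -/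
open Set

variable {Ω : Type*}

/-- If `A ≼⁻ B` and all elements of `B \ A` have edges only to elements of `A`
(i.e. `(B \ A)² ∩ (R₀ ∪ R₁) = ∅`), then any `η : A → 2` respecting the 2-graph extends
to a total coloring `η'' : B → 2` respecting the 2-graph. -/
theorem extend_respecting_coloring_total
    (R : Fin 2 → Ω → Ω → Prop)
    (hirr : ∀ e, Irreflexive (R e)) (hsym : ∀ e, Symmetric (R e))
    (hdisj : ∀ a b, ¬(R 0 a b ∧ R 1 a b))
    (A : Set Ω) (hA : PrecMinus R A)
    (hedge : ∀ (e : Fin 2) (x y : Ω), x ∉ A → y ∉ A → ¬ R e x y)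
    (η : Ω → Fin 2) (hη : RespectsOn R A η) :
    ∃ η'' : Ω → Fin 2, (∀ x ∈ A, η'' x = η x) ∧ RespectsOn R Set.univ η'' := by
  classical
  -- Key claim: no x ∉ A can have both a 0-neighbor colored 0 and a 1-neighbor colored 1.
  have key : ∀ x ∉ A,
      ¬((∃ a ∈ A, R 0 x a ∧ η a = 0) ∧ (∃ a ∈ A, R 1 x a ∧ η a = 1)) := by
    rintro x hx ⟨h0ex, h1ex⟩
    obtain ⟨a₀, ha₀, hr₀, he₀⟩ := h0ex
    obtain ⟨a₁, ha₁, hr₁, he₁⟩ := h1ex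
    have hne : a₀ ≠ a₁ := by
      rintro rfl
      rw [he₀] at he₁
      exact absurd he₁ (by decide)
    set s : Ω → Fin 2 := fun a => if a = a₀ then 0 else 1 with hs
    have hcard : ({a₀, a₁} : Finset Ω).card = 2 := by
      rw [Finset.card_insert_of_notMem (by simpa using hne), Finset.card_singleton]
    have hreal : Realizes R {a₀, a₁} s x := by
      intro w hw
      simp only [Finset.mem_insert, Finset.mem_singleton] at hw
      by_cases hwa : w = a₀
      · subst hwa; simpa [s] using hsym 0 hr₀
      · have hw1 : w = a₁ := by tauto
        rw [hw1]
        have h1 : s a₁ = 1 := if_neg (Ne.symm hne)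
        rw [h1]; exact hsym 1 hr₁
    obtain ⟨z, hz, hzr⟩ := hA {a₀, a₁} s (by omega)
      (by
        intro y hy
        simp only [Finset.coe_insert, Finset.coe_singleton, mem_insert_iff,
          mem_singleton_iff] at hy
        rcases hy with rfl | rfl <;> assumption)
      ⟨x, hreal⟩
    have h0 : R 0 a₀ z := by simpa [s] using hzr a₀ (by simp)
    have h1 : R 1 a₁ z := by
      have := hzr a₁ (by simp)
      have hs1 : s a₁ = 1 := by simp [s, if_neg (Ne.symm hne)]
      rwa [hs1] at this
    have hz0 : η z ≠ 0 := fun h => hη 0 a₀ ha₀ z hz h0 ⟨he₀, h⟩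
    have hz1 : η z ≠ 1 := fun h => hη 1 a₁ ha₁ z hz h1 ⟨he₁, h⟩
    generalize hζ : η z = v at hz0 hz1
    fin_cases v
    · exact hz0 rfl
    · exact hz1 rfl
  set η'' : Ω → Fin 2 := fun x =>
    if x ∈ A then η x else if ∃ a ∈ A, R 0 x a ∧ η a = 0 then 1 else 0 with hdef
  -- helper: a ∈ A, b ∉ A case
  have cross : ∀ (e : Fin 2) (a b : Ω), a ∈ A → b ∉ A → R e a b →
      ¬(η'' a = e ∧ η'' b = e) := by
    rintro e a b ha hb hab ⟨hea, heb⟩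
    rw [hdef] at hea heb
    simp only [if_pos ha, if_neg hb] at hea heb
    fin_cases e
    · -- e = 0 : the inner `if` gave 0, so the condition is false
      by_cases hc : ∃ a ∈ A, R 0 b a ∧ η a = 0
      · rw [if_pos hc] at heb; exact absurd heb (by decide)
      · exact hc ⟨a, ha, hsym 0 hab, hea⟩
    · -- e = 1 : the inner `if` gave 1, so the condition is true
      by_cases hc : ∃ a ∈ A, R 0 b a ∧ η a = 0
      · exact key b hb ⟨hc, ⟨a, ha, hsym 1 hab, hea⟩⟩
      · rw [if_neg hc] at heb; exact absurd heb (by decide)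
  refine ⟨η'', fun x hx => by simp [hdef, if_pos hx], ?_⟩
  rintro e a _ b _ hab ⟨hea, heb⟩
  by_cases ha : a ∈ A <;> by_cases hb : b ∈ A
  · -- both in A
    rw [hdef] at hea heb
    simp only [if_pos ha, if_pos hb] at hea heb
    exact hη e a ha b hb hab ⟨hea, heb⟩
  · exact cross e a b ha hb hab ⟨hea, heb⟩
  · exact cross e b a hb ha (hsym e hab) ⟨heb, hea⟩
  · exact hedge e a b ha hb hab
end

section
/- The forcing G_B associated to a 2-graph B of size ℵ₁ is σ-centered. -/
open Set

universe u

/-- A condition of the forcing `G_B` associated with a 2-graph on `Ω`: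
a function `p : F_p × n_p → 2` with `F_p` finite (encoded by a total function `v`
meaningful on `F × n`), where `F = ∅ ↔ n = 0`. -/
structure GBCond (Ω : Type u) where
  F : Finset Ω
  n : ℕ
  v : Ω → ℕ → Fin 2
  empty_iff : F = ∅ ↔ n = 0

/-- The order of `G_B`: `q ≤ p` iff `p ⊆ q` and each new level `k ∈ [n_p, n_q)`
induces a map on `F_p` respecting the 2-graph `R`. -/
def GBle {Ω : Type u} (R : Fin 2 → Ω → Ω → Prop) (q p : GBCond Ω) : Prop :=
  p.F ⊆ q.F ∧ p.n ≤ q.n ∧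
    (∀ a ∈ p.F, ∀ k < p.n, q.v a k = p.v a k) ∧
    ∀ k, p.n ≤ k → k < q.n → ∀ e : Fin 2, ∀ a ∈ p.F, ∀ b ∈ p.F,
      R e a b → ¬(q.v a k = e ∧ q.v b k = e)

lemma exists_trunc_aux {α : Type*} {X : Type*} (S : Finset α) (f : α → ℕ → X)
    (hf : Function.Injective f) :
    ∃ m : ℕ, ∀ a ∈ S, ∀ b ∈ S, (∀ i : Fin m, f a i = f b i) → a = b := by
  classical
  have key : ∀ a b : α, a ≠ b → ∃ i, f a i ≠ f b i := by
    intro a b hab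
    by_contra h
    push_neg at h
    exact hab (hf (funext h))
  choose d hd using key
  set D : α → α → ℕ := fun a b => if h : a ≠ b then d a b h + 1 else 0 with hD
  refine ⟨S.sup fun a => S.sup (D a), ?_⟩
  intro a ha b hb hab
  by_contra hne
  have hle : D a b ≤ S.sup fun a => S.sup (D a) :=
    le_trans (Finset.le_sup hb) (Finset.le_sup (f := fun a => S.sup (D a)) ha)
  have hDab : D a b = d a b hne + 1 := by simp [hD, hne]
  have hlt : d a b hne < S.sup fun a => S.sup (D a) := by omega
  exact hd a b hne (hab ⟨d a b hne, hlt⟩)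

/-- The forcing `G_B` associated to a 2-graph `B` of size `ℵ₁` is σ-centered:
there is a coloring of the conditions by countably many colors such that any finitely
many conditions of the same color have a common lower bound. -/
theorem GB_sigma_centered (Ω : Type u) (hΩ : Cardinal.mk Ω = Cardinal.aleph 1)
    (R : Fin 2 → Ω → Ω → Prop)
    (hirr : ∀ e, Irreflexive (R e)) (hsym : ∀ e, Symmetric (R e))
    (hdisj : ∀ a b, ¬(R 0 a b ∧ R 1 a b)) :
    ∃ c : GBCond Ω → ℕ, ∀ (s : Finset (GBCond Ω)) (m : ℕ),
      (∀ p ∈ s, c p = m) → ∃ r : GBCond Ω, ∀ p ∈ s, GBle R r p := by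
  classical
  obtain ⟨f⟩ : Nonempty (Ω × ℕ ↪ (ℕ → ULift.{u} Bool)) := by
    rw [← Cardinal.le_def, Cardinal.mk_prod, hΩ, Cardinal.mk_arrow]
    simp only [Cardinal.mk_uLift, Cardinal.mk_bool, Cardinal.mk_nat, Cardinal.lift_aleph0,
      Cardinal.lift_ofNat, Cardinal.lift_id']
    rw [Cardinal.mul_eq_left (Cardinal.aleph0_le_aleph 1) (Cardinal.aleph0_le_aleph 1)
      Cardinal.aleph0_ne_zero, Cardinal.two_power_aleph0]
    exact Cardinal.aleph_one_le_continuum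
  set T := Σ m : ℕ, ((Fin m → ULift.{u} Bool) → Fin 2) with hT
  set H : T → Ω → ℕ → Fin 2 := fun t a k => t.2 (fun i => f (a, k) i) with hH
  have hext : ∀ p : GBCond Ω, ∃ t : T, ∀ a ∈ p.F, ∀ k < p.n, H t a k = p.v a k := by
    intro p
    obtain ⟨m, hm⟩ := exists_trunc_aux (p.F ×ˢ Finset.range p.n) (fun z => f z) f.injective
    set P : (Fin m → ULift.{u} Bool) → Prop := fun u =>
      ∃ z ∈ p.F ×ˢ Finset.range p.n, (fun i : Fin m => f z i) = u with hP
    set σ : (Fin m → ULift.{u} Bool) → Fin 2 := fun u =>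
      if h : P u then p.v h.choose.1 h.choose.2 else 0 with hσ
    refine ⟨⟨m, σ⟩, ?_⟩
    intro a ha k hk
    have hz : (a, k) ∈ p.F ×ˢ Finset.range p.n := by
      simp [Finset.mem_product, ha, hk]
    have h : P (fun i : Fin m => f (a, k) i) := ⟨(a, k), hz, rfl⟩
    have h1 : H ⟨m, σ⟩ a k = σ (fun i : Fin m => f (a, k) i) := rfl
    have hval : σ (fun i : Fin m => f (a, k) i) = p.v h.choose.1 h.choose.2 := dif_pos h
    have hspec := h.choose_spec
    have heq : h.choose = (a, k) :=
      hm _ hspec.1 _ hz (fun i => congrFun hspec.2 i)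
    rw [h1, hval, heq]
  choose t ht using hext
  have hcT : Countable (ℕ × T) := by infer_instance
  obtain ⟨enc, henc⟩ := hcT.exists_injective_nat'
  refine ⟨fun p => enc (p.n, t p), ?_⟩
  intro s m0 hc
  rcases s.eq_empty_or_nonempty with rfl | ⟨p₀, hp₀⟩
  · exact ⟨⟨∅, 0, fun _ _ => 0, by simp⟩, by simp⟩
  have hkey : ∀ p ∈ s, p.n = p₀.n ∧ t p = t p₀ := by
    intro p hp
    have h2 : (p.n, t p) = (p₀.n, t p₀) := henc ((hc p hp).trans (hc p₀ hp₀).symm)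
    exact ⟨congrArg Prod.fst h2, congrArg Prod.snd h2⟩
  refine ⟨⟨s.sup GBCond.F, p₀.n, H (t p₀), ?_⟩, ?_⟩
  · constructor
    · intro hsup
      apply p₀.empty_iff.mp
      have hsub : p₀.F ⊆ s.sup GBCond.F := Finset.le_sup hp₀
      rw [hsup] at hsub
      exact Finset.subset_empty.mp hsub
    · intro hn
      rw [← Finset.bot_eq_empty, Finset.sup_eq_bot_iff]
      intro p hp
      rw [Finset.bot_eq_empty]
      exact p.empty_iff.mpr ((hkey p hp).1.trans hn)
  · intro p hp
    obtain ⟨hn, hts⟩ := hkey p hp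
    refine ⟨Finset.le_sup hp, by simp [hn], ?_, ?_⟩
    · intro a ha k hk
      show H (t p₀) a k = p.v a k
      rw [← hts]
      exact ht p a ha k hk
    · intro k hk1 hk2
      simp only at hk2
      omega
end

section
/- The Engelking–Karłowicz theorem for 2^{ω₁×ω}: there is a countable set H ⊆ 2^{ω₁×ω} such that every finite partial function from ω₁ × ω into {0,1} is extended by some member of H. -/
universe u

/-- The Engelking–Karłowicz theorem for `2^{ω₁ × ω}`: for `Ω` of size `ℵ₁`, there is a
countable set `H` of total functions `Ω × ℕ → 2` such that every finite partial function
from `Ω × ℕ` into `{0,1}` is extended by some member of `H`. -/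
theorem engelking_karlowicz_omega1 (Ω : Type u) (hΩ : Cardinal.mk Ω = Cardinal.aleph 1) :
    ∃ H : Set (Ω × ℕ → Fin 2), H.Countable ∧
      ∀ (s : Finset (Ω × ℕ)) (g : Ω × ℕ → Fin 2), ∃ h ∈ H, ∀ x ∈ s, h x = g x := by
  classical
  -- Step 1: embed `Ω × ℕ` into the Cantor space `ℕ → Bool`, using `ℵ₁ ≤ 𝔠`.
  obtain ⟨e⟩ : Nonempty ((Ω × ℕ) ↪ (ℕ → Bool)) := by
    rw [← Cardinal.lift_mk_le']
    have h1 : Cardinal.mk (Ω × ℕ) = Cardinal.aleph 1 := by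
      rw [Cardinal.mk_prod, hΩ, Cardinal.mk_nat]
      rw [Cardinal.lift_uzero, Cardinal.lift_aleph0]
      exact Cardinal.mul_eq_left (Cardinal.aleph0_le_aleph 1)
        ((Cardinal.aleph0_le_aleph 1)) Cardinal.aleph0_ne_zero
    have h2 : Cardinal.mk (ℕ → Bool) = Cardinal.continuum := by
      rw [Cardinal.mk_arrow, Cardinal.mk_nat, Cardinal.mk_bool, Cardinal.lift_uzero,
        Cardinal.lift_uzero, Cardinal.two_power_aleph0]
    rw [h1, h2, Cardinal.lift_continuum]
    exact Cardinal.lift_le_continuum.mpr Cardinal.aleph_one_le_continuum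
  -- Step 2: the countable family indexed by `n` and maps `(Fin n → Bool) → Fin 2`.
  let F : (Σ n : ℕ, ((Fin n → Bool) → Fin 2)) → (Ω × ℕ → Fin 2) :=
    fun p x => p.2 (fun i => e x i)
  refine ⟨Set.range F, Set.countable_range _, ?_⟩
  intro s g
  -- Step 3: choose `N` separating the (distinct) codes of elements of `s`.
  let d : (Ω × ℕ) × (Ω × ℕ) → ℕ := fun p =>
    if h : e p.1 ≠ e p.2 then Nat.find (Function.ne_iff.mp h) + 1 else 0
  set N := (s ×ˢ s).sup d with hN
  have sep : ∀ x ∈ s, ∀ y ∈ s,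
      (fun i : Fin N => e x i) = (fun i : Fin N => e y i) → x = y := by
    intro x hx y hy hxy
    by_contra hne
    have hexy : e x ≠ e y := fun h => hne (e.injective h)
    have hk := Nat.find_spec (Function.ne_iff.mp hexy)
    have hlt : Nat.find (Function.ne_iff.mp hexy) < N := by
      have h1 : d (x, y) ≤ N := Finset.le_sup (Finset.mem_product.mpr ⟨hx, hy⟩)
      have h2 : d (x, y) = Nat.find (Function.ne_iff.mp hexy) + 1 := dif_pos hexy
      omega
    exact hk (congrFun hxy ⟨_, hlt⟩)
  -- Step 4: define the selector `τ` and conclude.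
  let τ : (Fin N → Bool) → Fin 2 := fun σ =>
    if h : ∃ x ∈ s, (fun i : Fin N => e x i) = σ then g h.choose else 0
  refine ⟨F ⟨N, τ⟩, Set.mem_range_self _, ?_⟩
  intro x hx
  show τ (fun i => e x i) = g x
  have hex : ∃ y ∈ s, (fun i : Fin N => e y i) = (fun i : Fin N => e x i) := ⟨x, hx, rfl⟩
  simp only [τ, dif_pos hex]
  obtain ⟨hy1, hy2⟩ := hex.choose_spec
  rw [sep _ hy1 _ hx hy2]
end
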